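/- Let A be an n×m complex matrix with p ≤ q, let ρ be the maximal entry absolute value, and suppose every entry of absolute value ρ is the only nonzero entry of its row and column. Let C be obtained from A by zeroing all entries of absolute value ρ. Then ‖A‖_{p,q} = max(ρ, ‖C‖_{p,q}). -/

import Mathlib

open scoped BigOperators ENNReal

/-- The Hölder `ℓ_p` norm of a vector in `ℂ^m`, for `p ∈ [1,∞]`. -/
noncomputable def lpNorm {m : ℕ} (p : ℝ≥0∞) (x : Fin m → ℂ) : ℝ :=
  if p = ⊤ then ⨆ i, ‖x i‖ else (∑ i, ‖x i‖ ^ p.toReal) ^ (1 / p.toReal)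

/-- The operator norm of an `n × m` complex matrix induced by `ℓ_p` on `ℂ^m`
and `ℓ_q` on `ℂ^n`. -/
noncomputable def opNorm {n m : ℕ} (p q : ℝ≥0∞) (A : Matrix (Fin n) (Fin m) ℂ) : ℝ :=
  ⨆ x : {x : Fin m → ℂ // x ≠ 0}, lpNorm q (A.mulVec x.1) / lpNorm p x.1

/-- The operator norm of an `n × m` complex matrix induced by general norms
`μ` on `ℂ^m` and `ν` on `ℂ^n`. -/
noncomputable def opNormGen {n m : ℕ} (μ : (Fin m → ℂ) → ℝ) (ν : (Fin n → ℂ) → ℝ)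
    (A : Matrix (Fin n) (Fin m) ℂ) : ℝ :=
  ⨆ x : {x : Fin m → ℂ // x ≠ 0}, ν (A.mulVec x.1) / μ x.1

/-!
If `a = A i j` is the only nonzero entry of its row and of its column, then `A` is block diagonal
with blocks `(a)` and `A'`, the matrix `A` with `a` erased. For `p ≤ q` the `(p, q)` norm of a
block diagonal matrix is at most the larger `M` of the two block norms: splitting `x` and `y = A x`
along the blocks,
`‖y‖_q = (‖y₁‖_q^q + ‖y₂‖_q^q)^{1/q} ≤ M (‖x₁‖_p^q + ‖x₂‖_p^q)^{1/q} ≤ M (‖x₁‖_p^p + ‖x₂‖_p^p)^{1/p}`,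
which is `M ‖x‖_p` (with maxima in place of sums when `q = ∞`). Erasing the entries of modulus `ρ`
one at a time therefore gives `max ρ ‖A‖ = max ρ ‖C‖`, and `ρ ≤ ‖A‖` because every entry is
bounded by the operator norm.
-/

open WithLp Matrix

section lpNorm

variable {m : ℕ} {p : ℝ≥0∞}

theorem lpNorm_mono (p : ℝ≥0∞) {x y : Fin m → ℂ} (h : ∀ i, ‖x i‖ ≤ ‖y i‖) :
    lpNorm p x ≤ lpNorm p y := by
  unfold lpNorm
  split_ifs
  · exact ciSup_mono (Set.finite_range _).bddAbove h
  · gcongr with i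
    exact h i

theorem lpNorm_indicator_le (p : ℝ≥0∞) (S : Set (Fin m)) (x : Fin m → ℂ) :
    lpNorm p (S.indicator x) ≤ lpNorm p x :=
  lpNorm_mono p fun i => by
    by_cases hi : i ∈ S <;> simp [hi]

theorem lpNorm_eq_rpow_add_rpow_indicator (hp : 0 < p.toReal) (S : Set (Fin m))
    (x : Fin m → ℂ) :
    lpNorm p x = (lpNorm p (S.indicator x) ^ p.toReal + lpNorm p (Sᶜ.indicator x) ^ p.toReal)
      ^ (1 / p.toReal) := by
  have hp' : p ≠ ⊤ := fun h => by simp [h] at hp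
  have hr : p.toReal ≠ 0 := hp.ne'
  have hpow (z : Fin m → ℂ) : lpNorm p z ^ p.toReal = ∑ i, ‖z i‖ ^ p.toReal := by
    rw [lpNorm, if_neg hp', one_div, Real.rpow_inv_rpow (by positivity) hr]
  rw [hpow, hpow, ← Finset.sum_add_distrib, lpNorm, if_neg hp']
  congr 1
  refine Finset.sum_congr rfl fun i _ => ?_
  by_cases hi : i ∈ S <;> simp [hi, Real.zero_rpow hr]

variable [Fact (1 ≤ p)]

theorem lpNorm_eq_norm_toLp (x : Fin m → ℂ) : lpNorm p x = ‖toLp p x‖ := by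
  unfold lpNorm
  split_ifs with htop
  · subst htop
    rw [PiLp.norm_eq_ciSup]
  · rw [PiLp.norm_eq_sum ((ENNReal.toReal_pos_iff_ne_top p).2 htop)]

theorem lpNorm_nonneg (x : Fin m → ℂ) : 0 ≤ lpNorm p x := by
  rw [lpNorm_eq_norm_toLp]
  exact norm_nonneg _

theorem norm_le_lpNorm (x : Fin m → ℂ) (i : Fin m) : ‖x i‖ ≤ lpNorm p x := by
  rw [lpNorm_eq_norm_toLp]
  exact PiLp.norm_apply_le (toLp p x) i

theorem lpNorm_single (i : Fin m) (a : ℂ) : lpNorm p (Pi.single i a) = ‖a‖ := by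
  rw [lpNorm_eq_norm_toLp, PiLp.toLp_single, PiLp.norm_single]

end lpNorm

namespace Matrix

variable {ι κ α : Type*}

section Zero

variable [Zero α]

def IsIsolatedEntry (A : Matrix ι κ α) (i : ι) (j : κ) : Prop :=
  (∀ j' ≠ j, A i j' = 0) ∧ (∀ i' ≠ i, A i' j = 0)

variable [DecidableEq ι] [DecidableEq κ]

def eraseEntries (A : Matrix ι κ α) (E : Finset (ι × κ)) : Matrix ι κ α :=
  of fun i j => if (i, j) ∈ E then 0 else A i j

@[simp]
theorem eraseEntries_apply (A : Matrix ι κ α) (E : Finset (ι × κ)) (i : ι) (j : κ) :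
    A.eraseEntries E i j = if (i, j) ∈ E then 0 else A i j :=
  rfl

@[simp]
theorem eraseEntries_empty (A : Matrix ι κ α) : A.eraseEntries ∅ = A := by
  ext i j
  simp

theorem eraseEntries_eraseEntries (A : Matrix ι κ α) (E F : Finset (ι × κ)) :
    (A.eraseEntries E).eraseEntries F = A.eraseEntries (E ∪ F) := by
  ext i j
  by_cases hE : (i, j) ∈ E <;> by_cases hF : (i, j) ∈ F <;> simp [hE, hF]

theorem IsIsolatedEntry.eraseEntries {A : Matrix ι κ α} {i : ι} {j : κ}
    (h : A.IsIsolatedEntry i j) (E : Finset (ι × κ)) : (A.eraseEntries E).IsIsolatedEntry i j :=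
  ⟨fun j' hj' => by simp [h.1 j' hj'], fun i' hi' => by simp [h.2 i' hi']⟩

end Zero

variable [Fintype κ] [NonUnitalNonAssocSemiring α] [DecidableEq ι]

theorem IsIsolatedEntry.indicator_mulVec {A : Matrix ι κ α} {i : ι} {j : κ}
    (h : A.IsIsolatedEntry i j) (x : κ → α) :
    ({i} : Set ι).indicator (A *ᵥ x) = Pi.single i (A i j * x j) := by
  rw [Set.indicator_singleton, mulVec, dotProduct,
    Finset.sum_eq_single j (fun j' _ hj' => by rw [h.1 j' hj', zero_mul]) (by simp)]

variable [DecidableEq κ]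

theorem mulVec_eraseEntries_singleton {A : Matrix ι κ α} {i : ι} {j : κ}
    (hcol : ∀ i' ≠ i, A i' j = 0) (x : κ → α) :
    A.eraseEntries {(i, j)} *ᵥ x = A *ᵥ Set.indicator {j}ᶜ x := by
  ext i'
  simp only [mulVec, dotProduct]
  refine Finset.sum_congr rfl fun j' _ => ?_
  by_cases hj : j' = j
  · subst hj
    by_cases hi : i' = i <;> simp [hi, hcol]
  · simp [hj]

theorem IsIsolatedEntry.indicator_compl_mulVec {A : Matrix ι κ α} {i : ι} {j : κ}
    (h : A.IsIsolatedEntry i j) (x : κ → α) :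
    ({i}ᶜ : Set ι).indicator (A *ᵥ x) = A.eraseEntries {(i, j)} *ᵥ Set.indicator {j}ᶜ x := by
  ext i'
  by_cases hi : i' = i
  · subst hi
    rw [Set.indicator_of_notMem (by simp)]
    simp only [mulVec, dotProduct]
    refine (Finset.sum_eq_zero fun j' _ => ?_).symm
    by_cases hj : j' = j
    · simp [hj]
    · simp [h.1 j' hj]
  · rw [Set.indicator_of_mem (Set.mem_compl_singleton_iff.2 hi)]
    simp only [mulVec, dotProduct]
    refine Finset.sum_congr rfl fun j' _ => ?_
    by_cases hj : j' = j
    · simp [hj, h.2 i' hi]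
    · simp [hi, hj]

end Matrix

section OpNorm

variable {n m : ℕ} {p q : ℝ≥0∞} [Fact (1 ≤ p)] [Fact (1 ≤ q)]

theorem lpNorm_le_mul_of_indicator_compl (hpq : p ≤ q) (R : Set (Fin n)) (S : Set (Fin m))
    {y : Fin n → ℂ} {x : Fin m → ℂ} {M : ℝ} (hM : 0 ≤ M)
    (hR : lpNorm q (R.indicator y) ≤ M * lpNorm p (S.indicator x))
    (hRc : lpNorm q (Rᶜ.indicator y) ≤ M * lpNorm p (Sᶜ.indicator x)) :
    lpNorm q y ≤ M * lpNorm p x := by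
  by_cases hq : q = ⊤
  · subst hq
    rw [lpNorm, if_pos rfl]
    refine Real.iSup_le (fun i => ?_) (mul_nonneg hM (lpNorm_nonneg x))
    by_cases hi : i ∈ R
    · calc ‖y i‖ = ‖R.indicator y i‖ := by simp [hi]
        _ ≤ M * lpNorm p (S.indicator x) := (norm_le_lpNorm _ i).trans hR
        _ ≤ M * lpNorm p x := by gcongr; exact lpNorm_indicator_le p S x
    · calc ‖y i‖ = ‖Rᶜ.indicator y i‖ := by simp [hi]
        _ ≤ M * lpNorm p (Sᶜ.indicator x) := (norm_le_lpNorm _ i).trans hRc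
        _ ≤ M * lpNorm p x := by gcongr; exact lpNorm_indicator_le p Sᶜ x
  have hp : p ≠ ⊤ := ne_top_of_le_ne_top hq hpq
  have hr : 0 < p.toReal := (ENNReal.toReal_pos_iff_ne_top p).2 hp
  have hs : 0 < q.toReal := (ENNReal.toReal_pos_iff_ne_top q).2 hq
  set r := p.toReal
  set s := q.toReal
  set c := lpNorm p (S.indicator x)
  set d := lpNorm p (Sᶜ.indicator x)
  have hc : 0 ≤ c := lpNorm_nonneg _
  have hd : 0 ≤ d := lpNorm_nonneg _
  calc lpNorm q y
      = (lpNorm q (R.indicator y) ^ s + lpNorm q (Rᶜ.indicator y) ^ s) ^ (1 / s) :=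
        lpNorm_eq_rpow_add_rpow_indicator hs R y
    _ ≤ ((M * c) ^ s + (M * d) ^ s) ^ (1 / s) := by
        have := lpNorm_nonneg (p := q) (R.indicator y)
        have := lpNorm_nonneg (p := q) (Rᶜ.indicator y)
        gcongr
    _ = M * (c ^ s + d ^ s) ^ (1 / s) := by
        rw [Real.mul_rpow hM hc, Real.mul_rpow hM hd, ← mul_add,
          Real.mul_rpow (by positivity) (by positivity), ← Real.rpow_mul hM,
          mul_one_div_cancel hs.ne', Real.rpow_one]
    _ ≤ M * (c ^ r + d ^ r) ^ (1 / r) := by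
        gcongr
        exact Real.rpow_add_rpow_le hc hd hr (ENNReal.toReal_mono hq hpq)
    _ = M * lpNorm p x := by
        rw [lpNorm_eq_rpow_add_rpow_indicator hr S x]

theorem opNorm_eq_norm_toLpLin (A : Matrix (Fin n) (Fin m) ℂ) :
    opNorm p q A = ‖LinearMap.toContinuousLinearMap (Matrix.toLpLin p q A)‖ := by
  set T := LinearMap.toContinuousLinearMap (Matrix.toLpLin p q A)
  have hT (x : Fin m → ℂ) : lpNorm q (A *ᵥ x) = ‖T (toLp p x)‖ := lpNorm_eq_norm_toLp _
  have hx (x : Fin m → ℂ) : lpNorm p x = ‖toLp p x‖ := lpNorm_eq_norm_toLp _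
  have hle (x : {x : Fin m → ℂ // x ≠ 0}) : lpNorm q (A *ᵥ x.1) / lpNorm p x.1 ≤ ‖T‖ := by
    rw [hT, hx]
    exact div_le_of_le_mul₀ (norm_nonneg _) (norm_nonneg _) (T.le_opNorm _)
  refine le_antisymm (Real.iSup_le hle (norm_nonneg _)) ?_
  refine T.opNorm_le_bound (Real.iSup_nonneg fun x => ?_) fun x => ?_
  · rw [hT, hx]
    positivity
  rcases eq_or_ne x 0 with rfl | hx0
  · simp
  have hpos : 0 < ‖x‖ := norm_pos_iff.2 hx0
  rw [← div_le_iff₀ hpos]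
  have := le_ciSup ⟨‖T‖, Set.forall_mem_range.2 hle⟩ ⟨ofLp x, by simpa using hx0⟩
  simpa [opNorm, hT, hx] using this

theorem opNorm_nonneg (A : Matrix (Fin n) (Fin m) ℂ) : 0 ≤ opNorm p q A :=
  (opNorm_eq_norm_toLpLin (p := p) (q := q) A).symm ▸ norm_nonneg _

theorem lpNorm_mulVec_le (A : Matrix (Fin n) (Fin m) ℂ) (x : Fin m → ℂ) :
    lpNorm q (A *ᵥ x) ≤ opNorm p q A * lpNorm p x := by
  rw [opNorm_eq_norm_toLpLin, lpNorm_eq_norm_toLp, lpNorm_eq_norm_toLp]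
  exact (LinearMap.toContinuousLinearMap (toLpLin p q A)).le_opNorm (toLp p x)

theorem opNorm_le_bound {A : Matrix (Fin n) (Fin m) ℂ} {M : ℝ} (hM : 0 ≤ M)
    (h : ∀ x, lpNorm q (A *ᵥ x) ≤ M * lpNorm p x) : opNorm p q A ≤ M := by
  rw [opNorm_eq_norm_toLpLin]
  refine ContinuousLinearMap.opNorm_le_bound _ hM fun x => ?_
  simpa [lpNorm_eq_norm_toLp, toLpLin_apply] using h (ofLp x)

theorem norm_entry_le_opNorm (A : Matrix (Fin n) (Fin m) ℂ) (i : Fin n) (j : Fin m) :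
    ‖A i j‖ ≤ opNorm p q A :=
  calc ‖A i j‖ ≤ lpNorm q (A *ᵥ Pi.single j 1) := by
        simpa [mulVec_single_one] using norm_le_lpNorm (p := q) (A *ᵥ Pi.single j 1) i
    _ ≤ opNorm p q A * lpNorm p (Pi.single j (1 : ℂ)) := lpNorm_mulVec_le A _
    _ = opNorm p q A := by rw [lpNorm_single, norm_one, mul_one]

theorem opNorm_eraseEntries_singleton_le {A : Matrix (Fin n) (Fin m) ℂ} {i : Fin n}
    {j : Fin m} (hcol : ∀ i' ≠ i, A i' j = 0) :
    opNorm p q (A.eraseEntries {(i, j)}) ≤ opNorm p q A :=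
  opNorm_le_bound (opNorm_nonneg A) fun x => by
    rw [mulVec_eraseEntries_singleton hcol]
    exact (lpNorm_mulVec_le A _).trans
      (mul_le_mul_of_nonneg_left (lpNorm_indicator_le p _ x) (opNorm_nonneg A))

theorem Matrix.IsIsolatedEntry.opNorm_eq (hpq : p ≤ q) {A : Matrix (Fin n) (Fin m) ℂ}
    {i : Fin n} {j : Fin m} (h : A.IsIsolatedEntry i j) :
    opNorm p q A = max ‖A i j‖ (opNorm p q (A.eraseEntries {(i, j)})) := by
  refine le_antisymm ?_
    (max_le (norm_entry_le_opNorm A i j) (opNorm_eraseEntries_singleton_le h.2))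
  refine opNorm_le_bound (le_max_of_le_left (norm_nonneg _)) fun x =>
    lpNorm_le_mul_of_indicator_compl hpq {i} {j} (le_max_of_le_left (norm_nonneg _)) ?_ ?_
  · rw [h.indicator_mulVec, Set.indicator_singleton, lpNorm_single, lpNorm_single, norm_mul]
    gcongr
    exact le_max_left _ _
  · rw [h.indicator_compl_mulVec]
    exact (lpNorm_mulVec_le _ _).trans
      (mul_le_mul_of_nonneg_right (le_max_right _ _) (lpNorm_nonneg _))

theorem max_opNorm_eraseEntries (hpq : p ≤ q) {A : Matrix (Fin n) (Fin m) ℂ} {ρ : ℝ}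
    (E : Finset (Fin n × Fin m)) (hE : ∀ e ∈ E, A.IsIsolatedEntry e.1 e.2 ∧ ‖A e.1 e.2‖ ≤ ρ) :
    max ρ (opNorm p q (A.eraseEntries E)) = max ρ (opNorm p q A) := by
  induction E using Finset.induction_on with
  | empty => rw [Matrix.eraseEntries_empty]
  | @insert e E he ih =>
    rcases e with ⟨i, j⟩
    obtain ⟨hiso, hρ⟩ := hE (i, j) (Finset.mem_insert_self _ E)
    have hB : A.eraseEntries E i j = A i j := by simp [he]
    calc max ρ (opNorm p q (A.eraseEntries (insert (i, j) E)))
        = max ρ (max ‖A i j‖ (opNorm p q ((A.eraseEntries E).eraseEntries {(i, j)}))) := by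
          rw [← max_assoc, max_eq_left hρ, Matrix.eraseEntries_eraseEntries, Finset.union_comm,
            ← Finset.insert_eq]
      _ = max ρ (opNorm p q (A.eraseEntries E)) := by
          rw [(hiso.eraseEntries E).opNorm_eq hpq, hB]
      _ = max ρ (opNorm p q A) := ih fun e he' => hE e (Finset.mem_insert_of_mem he')

end OpNorm

/-- Equation (3.2): if `p ≤ q` and every entry of maximal absolute value `ρ`
is the only nonzero entry of its row and column, then
`‖A‖_{p,q} = max (ρ, ‖C‖_{p,q})`, where `C` is obtained from `A` by zeroing
all entries of absolute value `ρ`. -/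
theorem stmt_14 {n m : ℕ} (A : Matrix (Fin n) (Fin m) ℂ) (p q : ℝ≥0∞)
    (hp : 1 ≤ p) (hpq : p ≤ q) (ρ : ℝ)
    (hρ : IsGreatest {t : ℝ | ∃ i j, t = ‖A i j‖} ρ)
    (hi : ∀ i j, ‖A i j‖ = ρ →
      (∀ j', j' ≠ j → A i j' = 0) ∧ (∀ i', i' ≠ i → A i' j = 0)) :
    opNorm p q A =
      max ρ (opNorm p q (Matrix.of fun i j => if ‖A i j‖ = ρ then 0 else A i j)) := by
  have : Fact (1 ≤ p) := ⟨hp⟩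
  have : Fact (1 ≤ q) := ⟨hp.trans hpq⟩
  obtain ⟨⟨i₀, j₀, hρ₀⟩, -⟩ := hρ
  let E := Finset.univ.filter fun e : Fin n × Fin m => ‖A e.1 e.2‖ = ρ
  have hC : (Matrix.of fun i j => if ‖A i j‖ = ρ then 0 else A i j) = A.eraseEntries E := by
    ext i j
    simp [E]
  rw [hC, max_opNorm_eraseEntries hpq E fun e he => ?_,
    max_eq_right (hρ₀ ▸ norm_entry_le_opNorm A i₀ j₀)]
  have he : ‖A e.1 e.2‖ = ρ := (Finset.mem_filter.1 he).2
  exact ⟨hi e.1 e.2 he, he.le⟩
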